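/- arXiv:1809.08642 — 4 statements merged into one kernel-verified Lean document; each statement's English description precedes it below -/
import Mathlib

section
/- For any indices 1 ≤ i, j ≤ n-1, the 2×2 minor of the Farey determinants matrix satisfies d_{ij}·d_{(i+1)(j+1)} − d_{i(j+1)}·d_{(i+1)j} = 1. -/
/-- The Farey set of order `N`: rationals in `[0,1]` with denominator at most `N`. -/
def farey (N : ℕ) : Set ℚ := {q | 0 ≤ q ∧ q ≤ 1 ∧ q.den ≤ N}

/-- `x` and `y` are consecutive (neighbors) in the Farey sequence `F_N`. -/
def fareyNeighbors (N : ℕ) (x y : ℚ) : Prop :=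
  x ∈ farey N ∧ y ∈ farey N ∧ x < y ∧ ∀ z ∈ farey N, ¬(x < z ∧ z < y)

/-- The Farey sequence `F_N` as an ascending list of rationals. -/
def fareyList (N : ℕ) : List ℚ :=
  ((Finset.range (N + 1)).biUnion fun k =>
    (Finset.range (k + 1)).image fun h : ℕ => (h : ℚ) / (k : ℚ)).sort (· ≤ ·)

/-- The Farey determinants matrix entry `d_{ij} = h_j k_i - h_i k_j` (0-based indices). -/
def dM (N : ℕ) (i j : ℕ) : ℤ :=
  ((fareyList N).getD j 0).num * (((fareyList N).getD i 0).den : ℤ) -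
    ((fareyList N).getD i 0).num * (((fareyList N).getD j 0).den : ℤ)

/-!
Write `x = a/b` and `y = c/d` in lowest terms and `Δ(x, y) = cb - ad` (`fareyDet`). Every `d_{ij}`
is `Δ(x_i, x_j)`, and the 2×2 minor is the three-term Plücker relation
`Δ(x_i, x_j) Δ(x_{i+1}, x_{j+1}) - Δ(x_i, x_{j+1}) Δ(x_{i+1}, x_j) = Δ(x_i, x_{i+1}) Δ(x_j, x_{j+1})`,
so it suffices that consecutive Farey fractions have `Δ = 1`. For `x = a/b < 1` in `F_N`, coprimality
gives `p/q` with `pb - aq = 1` and `N - b < q ≤ N`; it lies in `F_N`, and any `z` strictly between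
`x` and `p/q` has `den z = q·Δ(x, z) + b·Δ(z, p/q) ≥ q + b > N`. Hence `p/q` is the successor of `x`.
-/

theorem Rat.num_div_den_eq_of_isCoprime {p q : ℤ} (hq : 0 < q) (h : IsCoprime p q) :
    (p / q : ℚ).num = p ∧ ((p / q : ℚ).den : ℤ) = q :=
  have hcop : p.natAbs.Coprime q.natAbs := Int.isCoprime_iff_gcd_eq_one.mp h
  ⟨Rat.num_div_eq_of_coprime hq hcop, Rat.den_div_eq_of_coprime hq hcop⟩

theorem Rat.den_natCast_div_natCast_le (h : ℕ) {k : ℕ} (hk : 0 < k) : ((h : ℚ) / k).den ≤ k := by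
  have hdvd := Rat.den_dvd h k
  rw [Rat.divInt_eq_div] at hdvd
  push_cast at hdvd
  exact Nat.le_of_dvd hk (by exact_mod_cast hdvd)

theorem List.SortedLT.notMem_of_getElem_lt_of_lt_getElem_succ {α : Type*} [Preorder α]
    {l : List α} (hl : l.SortedLT) {i : ℕ} (hi : i + 1 < l.length) {z : α} (h₁ : l[i] < z)
    (h₂ : z < l[i + 1]) : z ∉ l := by
  intro hz
  obtain ⟨k, hk, rfl⟩ := List.getElem_of_mem hz
  have hik : i < k := (hl.strictMono_get.lt_iff_lt (a := ⟨i, by omega⟩) (b := ⟨k, hk⟩)).mp h₁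
  have hki : k < i + 1 := (hl.strictMono_get.lt_iff_lt (a := ⟨k, hk⟩) (b := ⟨i + 1, hi⟩)).mp h₂
  omega

def fareyDet (x y : ℚ) : ℤ := y.num * x.den - x.num * y.den

theorem fareyDet_pos_iff {x y : ℚ} : 0 < fareyDet x y ↔ x < y := by
  rw [Rat.lt_iff, fareyDet, sub_pos]

theorem fareyDet_mul_fareyDet_sub_fareyDet_mul_fareyDet (w x y z : ℚ) :
    fareyDet w y * fareyDet x z - fareyDet w z * fareyDet x y = fareyDet w x * fareyDet y z := by
  unfold fareyDet
  ring

theorem den_mul_fareyDet (x y z : ℚ) :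
    z.den * fareyDet x y = y.den * fareyDet x z + x.den * fareyDet z y := by
  unfold fareyDet
  ring

theorem den_add_den_le_of_fareyDet_eq_one {x y z : ℚ} (hxy : fareyDet x y = 1) (hxz : x < z)
    (hzy : z < y) : x.den + y.den ≤ z.den := by
  have h := den_mul_fareyDet x y z
  rw [hxy, mul_one] at h
  have hxz' : 1 ≤ fareyDet x z := fareyDet_pos_iff.mpr hxz
  have hzy' : 1 ≤ fareyDet z y := fareyDet_pos_iff.mpr hzy
  have : (x.den + y.den : ℤ) ≤ z.den := by nlinarith
  exact_mod_cast this

theorem exists_fareyDet_eq_one {N : ℕ} {x : ℚ} (hx : x ∈ farey N) (hx1 : x < 1) :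
    ∃ r ∈ farey N, fareyDet x r = 1 ∧ N < x.den + r.den := by
  obtain ⟨hx0, -, hxN⟩ := hx
  have ha : 0 ≤ x.num := Rat.num_nonneg.mpr hx0
  have hab : x.num < x.den := Rat.num_lt_denom_iff.mpr hx1
  obtain ⟨u, v, huv⟩ := x.isCoprime_num_den
  set b : ℤ := (x.den : ℤ) with hbx
  have hb : 0 < b := by positivity
  -- `q` is the largest integer `≤ N` with `q ≡ -u (mod b)`, so that `b ∣ x.num * q + 1`.
  set t := (N + u) / b
  set q := b * t - u
  set p := v + x.num * t
  have hpq : b * p + (-x.num) * q = 1 := by linear_combination huv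
  have hq : q = N - (N + u) % b := by rw [Int.emod_def]; ring
  have hmod := Int.emod_nonneg (N + u) hb.ne'
  have hmod' := Int.emod_lt_of_pos (N + u) hb
  have hbN : b ≤ N := by rw [hbx]; exact_mod_cast hxN
  have hq0 : 0 < q := by omega
  have hp0 : 0 < p := by nlinarith
  have hp_le_q : p ≤ q := by nlinarith
  obtain ⟨hnum, hden⟩ := Rat.num_div_den_eq_of_isCoprime hq0 ⟨b, -x.num, hpq⟩
  refine ⟨p / q, ⟨by positivity, (div_le_one (by exact_mod_cast hq0)).mpr (by exact_mod_cast hp_le_q),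
    by omega⟩, ?_, by omega⟩
  rw [fareyDet, hnum, hden]
  linear_combination hpq

theorem fareyNeighbors.fareyDet_eq_one {N : ℕ} {x y : ℚ} (h : fareyNeighbors N x y) :
    fareyDet x y = 1 := by
  obtain ⟨hx, hy, hxy, hgap⟩ := h
  obtain ⟨r, hr, hxr, hN⟩ := exists_fareyDet_eq_one hx (hxy.trans_le hy.2.1)
  suffices y = r by rwa [this]
  by_contra hne
  rcases lt_or_gt_of_ne hne with hyr | hry
  · have := den_add_den_le_of_fareyDet_eq_one hxr hxy hyr
    have := hy.2.2
    omega
  · exact hgap r hr ⟨fareyDet_pos_iff.mp (by omega), hry⟩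

theorem fareyList_zero : fareyList 0 = [0] := by
  simp [fareyList]

theorem mem_fareyList {N : ℕ} (hN : 1 ≤ N) {q : ℚ} : q ∈ fareyList N ↔ q ∈ farey N := by
  simp only [fareyList, Finset.mem_sort, Finset.mem_biUnion, Finset.mem_image, Finset.mem_range,
    Nat.lt_succ_iff]
  constructor
  · rintro ⟨k, hkN, h, hhk, rfl⟩
    obtain rfl | hk := Nat.eq_zero_or_pos k
    · simpa [farey] using hN
    · exact ⟨by positivity, div_le_one_of_le₀ (by exact_mod_cast hhk) (by positivity),
        (Rat.den_natCast_div_natCast_le h hk).trans hkN⟩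
  · rintro ⟨hq0, hq1, hqN⟩
    refine ⟨q.den, hqN, q.num.toNat, ?_, ?_⟩
    · have : q.num ≤ q.den := by simpa using (Rat.le_iff q 1).mp hq1
      omega
    · have hnum : ((q.num.toNat : ℤ) : ℚ) = q.num := by
        rw [Int.toNat_of_nonneg (Rat.num_nonneg.mpr hq0)]
      rw [← Int.cast_natCast, hnum, Rat.num_div_den]

theorem fareyNeighbors_getElem_fareyList {N i : ℕ} (hi : i + 1 < (fareyList N).length) :
    fareyNeighbors N (fareyList N)[i] (fareyList N)[i + 1] := by
  have hN : 1 ≤ N := by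
    rcases N with _ | N
    · simp [fareyList_zero] at hi
    · omega
  have hsorted : (fareyList N).SortedLT := Finset.sortedLT_sort _
  refine ⟨(mem_fareyList hN).mp (List.getElem_mem _), (mem_fareyList hN).mp (List.getElem_mem _),
    hsorted.getElem_lt_getElem_of_lt (Nat.lt_succ_self i), fun z hz ⟨h₁, h₂⟩ => ?_⟩
  exact hsorted.notMem_of_getElem_lt_of_lt_getElem_succ hi h₁ h₂ ((mem_fareyList hN).mpr hz)

theorem dM_self_succ {N i : ℕ} (hi : i + 1 < (fareyList N).length) : dM N i (i + 1) = 1 := by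
  rw [dM, List.getD_eq_getElem _ _ hi, List.getD_eq_getElem _ _ (by omega)]
  exact (fareyNeighbors_getElem_fareyList hi).fareyDet_eq_one

theorem dM_minor_one (N : ℕ) (i j : ℕ) (hi : i + 1 < (fareyList N).length)
    (hj : j + 1 < (fareyList N).length) :
    dM N i j * dM N (i + 1) (j + 1) - dM N i (j + 1) * dM N (i + 1) j = 1 :=
  calc dM N i j * dM N (i + 1) (j + 1) - dM N i (j + 1) * dM N (i + 1) j
      _ = dM N i (i + 1) * dM N j (j + 1) :=
        fareyDet_mul_fareyDet_sub_fareyDet_mul_fareyDet _ _ _ _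
      _ = 1 := by rw [dM_self_succ hi, dM_self_succ hj, one_mul]
end

section
/- For any indices k < j < i into the Farey sequence F_N, the three pairwise greatest common divisors coincide: gcd(d_{kj}, d_{ki}) = gcd(d_{kj}, d_{ji}) = gcd(d_{ki}, d_{ji}), where d_{pq} = h_q*k_p − h_p*k_q. -/
/-!
Write `u_p = (h_p, k_p)`, a primitive vector since `p` is in lowest terms. Any three vectors of `ℤ²`
satisfy `d_{qr} u_p - d_{pr} u_q + d_{pq} u_r = 0`, so a common divisor of two of the determinants
divides the third one times a primitive vector, hence divides the third determinant itself: the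
three pairs have the same common divisors.
-/

def ratDet (p q : ℚ) : ℤ := q.num * p.den - p.num * q.den

lemma dvd_ratDet_comm {e : ℤ} {p q : ℚ} : e ∣ ratDet q p ↔ e ∣ ratDet p q := by
  rw [show ratDet q p = -ratDet p q by unfold ratDet; ring, dvd_neg]

lemma Rat.dvd_of_dvd_num_mul_of_dvd_den_mul {e x : ℤ} (q : ℚ) (hnum : e ∣ q.num * x)
    (hden : e ∣ q.den * x) : e ∣ x := by
  obtain ⟨u, v, huv⟩ : IsCoprime q.num (q.den : ℤ) := Int.isCoprime_iff_gcd_eq_one.mpr q.reduced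
  rw [show x = u * (q.num * x) + v * (q.den * x) by linear_combination -x * huv]
  exact dvd_add (hnum.mul_left u) (hden.mul_left v)

lemma dvd_ratDet_of_dvd_ratDet_of_dvd_ratDet {e : ℤ} {p q r : ℚ} (hpq : e ∣ ratDet p q)
    (hpr : e ∣ ratDet p r) : e ∣ ratDet q r := by
  have hnum : p.num * ratDet q r = q.num * ratDet p r - r.num * ratDet p q := by
    unfold ratDet; ring
  have hden : (p.den : ℤ) * ratDet q r = q.den * ratDet p r - r.den * ratDet p q := by
    unfold ratDet; ring
  refine Rat.dvd_of_dvd_num_mul_of_dvd_den_mul p ?_ ?_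
  · rw [hnum]; exact dvd_sub (hpr.mul_left _) (hpq.mul_left _)
  · rw [hden]; exact dvd_sub (hpr.mul_left _) (hpq.mul_left _)

lemma Int.gcd_eq_gcd_of_dvd_iff_dvd {a b c : ℤ} (hbc : ∀ e, e ∣ a → e ∣ b → e ∣ c)
    (hcb : ∀ e, e ∣ a → e ∣ c → e ∣ b) : Int.gcd a b = Int.gcd a c := by
  apply Nat.dvd_antisymm <;> rw [← Int.natCast_dvd_natCast]
  · exact Int.dvd_coe_gcd (gcd_dvd_left a b) (hbc _ (gcd_dvd_left a b) (gcd_dvd_right a b))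
  · exact Int.dvd_coe_gcd (gcd_dvd_left a c) (hcb _ (gcd_dvd_left a c) (gcd_dvd_right a c))

lemma ratDet_gcd_triple (p q r : ℚ) :
    Int.gcd (ratDet p q) (ratDet p r) = Int.gcd (ratDet p q) (ratDet q r) ∧
      Int.gcd (ratDet p q) (ratDet q r) = Int.gcd (ratDet p r) (ratDet q r) := by
  have hqr : ∀ e, e ∣ ratDet p q → e ∣ ratDet p r → e ∣ ratDet q r :=
    fun _ => dvd_ratDet_of_dvd_ratDet_of_dvd_ratDet
  have hpr : ∀ e, e ∣ ratDet p q → e ∣ ratDet q r → e ∣ ratDet p r := fun _ hpq hqr =>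
    dvd_ratDet_of_dvd_ratDet_of_dvd_ratDet (dvd_ratDet_comm.mpr hpq) hqr
  have hpq : ∀ e, e ∣ ratDet q r → e ∣ ratDet p r → e ∣ ratDet p q := fun _ hqr hpr =>
    dvd_ratDet_of_dvd_ratDet_of_dvd_ratDet (dvd_ratDet_comm.mpr hpr) (dvd_ratDet_comm.mpr hqr)
  refine ⟨Int.gcd_eq_gcd_of_dvd_iff_dvd hqr hpr, ?_⟩
  rw [Int.gcd_comm, Int.gcd_comm (ratDet p r)]
  exact Int.gcd_eq_gcd_of_dvd_iff_dvd (fun e h₁ h₂ => hpr e h₂ h₁) hpq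

theorem dM_gcd_triple_general (N : ℕ) (k j i : ℕ) :
    Int.gcd (dM N k j) (dM N k i) = Int.gcd (dM N k j) (dM N j i) ∧
      Int.gcd (dM N k j) (dM N j i) = Int.gcd (dM N k i) (dM N j i) :=
  ratDet_gcd_triple _ _ _

theorem dM_gcd_triple (N : ℕ) (k j i : ℕ) (hkj : k < j) (hji : j < i)
    (hi : i < (fareyList N).length) :
    Int.gcd (dM N k j) (dM N k i) = Int.gcd (dM N k j) (dM N j i) ∧
      Int.gcd (dM N k j) (dM N j i) = Int.gcd (dM N k i) (dM N j i) :=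
  dM_gcd_triple_general N k j i
end

section
/- For three irreducible fractions x < y < z, the numerator of z − x is divisible by gcd(numerator of y − x, numerator of z − y); more precisely, writing d(a/b, c/e) = c*b − a*e for reduced fractions, gcd(d(x,y), d(y,z)) = gcd(d(x,y), d(x,z)) = gcd(d(x,z), d(y,z)). -/
/-- The Farey determinant of two (reduced) fractions  and . -/
def fdet (x y : ℚ) : ℤ := y.num * (x.den : ℤ) - x.num * (y.den : ℤ)

/-!
Viewing a reduced fraction `x` as the primitive vector `(x.num, x.den)`, `fdet` is a
determinant, so for any three fractions `fdet x z • y = fdet x y • z + fdet y z • x`.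
A common divisor of `fdet x y` and `fdet y z` therefore divides both coordinates of
`fdet x z • y`, hence divides `fdet x z` because `y.num` and `y.den` are coprime.
By antisymmetry of `fdet` the same holds for every pair of the three determinants,
so all three pairwise gcds agree.
-/

theorem IsCoprime.dvd_of_dvd_mul_of_dvd_mul {R : Type*} [CommRing R] {p q c d : R}
    (hpq : IsCoprime p q) (hp : d ∣ c * p) (hq : d ∣ c * q) : d ∣ c := by
  obtain ⟨u, v, huv⟩ := hpq
  have hc : c = u * (c * p) + v * (c * q) := by linear_combination -c * huv
  rw [hc]
  exact dvd_add (dvd_mul_of_dvd_right hp u) (dvd_mul_of_dvd_right hq v)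

theorem Int.gcd_eq_gcd_of_dvd_of_dvd {a b c : ℤ} (hc : (Int.gcd a b : ℤ) ∣ c)
    (hb : (Int.gcd a c : ℤ) ∣ b) : Int.gcd a b = Int.gcd a c :=
  Nat.dvd_antisymm (Int.natCast_dvd_natCast.mp (Int.dvd_coe_gcd (Int.gcd_dvd_left _ _) hc))
    (Int.natCast_dvd_natCast.mp (Int.dvd_coe_gcd (Int.gcd_dvd_left _ _) hb))

theorem fdet_swap (x y : ℚ) : fdet y x = -fdet x y := by
  unfold fdet; ring

theorem fdet_mul_num (x y z : ℚ) : fdet x z * y.num = fdet x y * z.num + fdet y z * x.num := by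
  unfold fdet; ring

theorem fdet_mul_den (x y z : ℚ) :
    fdet x z * y.den = fdet x y * z.den + fdet y z * x.den := by
  unfold fdet; ring

theorem dvd_fdet_of_dvd_of_dvd {d : ℤ} {x y z : ℚ} (hxy : d ∣ fdet x y) (hyz : d ∣ fdet y z) :
    d ∣ fdet x z :=
  (Rat.isCoprime_num_den y).dvd_of_dvd_mul_of_dvd_mul
    (fdet_mul_num x y z ▸ dvd_add (dvd_mul_of_dvd_left hxy _) (dvd_mul_of_dvd_left hyz _))
    (fdet_mul_den x y z ▸ dvd_add (dvd_mul_of_dvd_left hxy _) (dvd_mul_of_dvd_left hyz _))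

theorem fdet_gcd_triple_general (x y z : ℚ) :
    ((Int.gcd (fdet x y) (fdet y z) : ℤ) ∣ fdet x z) ∧
    Int.gcd (fdet x y) (fdet y z) = Int.gcd (fdet x y) (fdet x z) ∧
    Int.gcd (fdet x y) (fdet x z) = Int.gcd (fdet x z) (fdet y z) := by
  have hxz : (Int.gcd (fdet x y) (fdet y z) : ℤ) ∣ fdet x z :=
    dvd_fdet_of_dvd_of_dvd (Int.gcd_dvd_left _ _) (Int.gcd_dvd_right _ _)
  have hyz : (Int.gcd (fdet x y) (fdet x z) : ℤ) ∣ fdet y z :=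
    dvd_fdet_of_dvd_of_dvd (fdet_swap x y ▸ (Int.gcd_dvd_left _ _).neg_right)
      (Int.gcd_dvd_right _ _)
  have hxy : (Int.gcd (fdet x z) (fdet y z) : ℤ) ∣ fdet x y :=
    dvd_fdet_of_dvd_of_dvd (Int.gcd_dvd_left _ _)
      (fdet_swap y z ▸ (Int.gcd_dvd_right _ _).neg_right)
  refine ⟨hxz, Int.gcd_eq_gcd_of_dvd_of_dvd hxz hyz, ?_⟩
  rw [Int.gcd_comm (fdet x y)]
  exact Int.gcd_eq_gcd_of_dvd_of_dvd (Int.gcd_comm (fdet x z) _ ▸ hyz) hxy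

theorem fdet_gcd_triple (x y z : ℚ) (hxy : x < y) (hyz : y < z) :
    ((Int.gcd (fdet x y) (fdet y z) : ℤ) ∣ fdet x z) ∧
    Int.gcd (fdet x y) (fdet y z) = Int.gcd (fdet x y) (fdet x z) ∧
    Int.gcd (fdet x y) (fdet x z) = Int.gcd (fdet x z) (fdet y z) :=
  fdet_gcd_triple_general x y z
end

section
/- Let i ≥ 1 and let N be a multiple of i(i+1), and let q be an integer with N/(i+1) < q ≤ N/i. Then the map h/k ↦ k/(kq − h) is a bijection from F_i onto the set of fractions of F_N lying in the interval [1/q, 1/(q-1)]. -/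
lemma num_eq_self_mul_den (x : ℚ) : (x.num : ℚ) = x * x.den := by
  have h := Rat.num_div_den x
  have hd : (x.den : ℚ) ≠ 0 := by exact_mod_cast x.den_ne_zero
  rw [div_eq_iff hd] at h
  exact h

/-- For `x ≤ 1 < q`, the map `h/k ↦ k/(kq - h)` is just `x ↦ (q - x)⁻¹`. -/
lemma key_eq (q : ℕ) (hq : 2 ≤ q) (x : ℚ) (hx2 : x ≤ 1) :
    (x.den : ℚ) / ((x.den : ℚ) * (q : ℚ) - (x.num : ℚ)) = ((q : ℚ) - x)⁻¹ := by
  have hd : (x.den : ℚ) ≠ 0 := by exact_mod_cast x.den_ne_zero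
  have hnum := num_eq_self_mul_den x
  have hq' : (2 : ℚ) ≤ (q : ℚ) := by exact_mod_cast hq
  have hqx : (0 : ℚ) < (q : ℚ) - x := by linarith
  rw [hnum, show (x.den : ℚ) * q - x * x.den = ((q : ℚ) - x) * x.den by ring,
    div_mul_eq_div_div_swap, div_self hd, one_div]

theorem farey_interval_bijection (i N q : ℕ) (hi : 1 ≤ i) (hdvd : i * (i + 1) ∣ N)
    (hq1 : N / (i + 1) < q) (hq2 : q ≤ N / i) :
    Set.BijOn (fun x : ℚ => (x.den : ℚ) / ((x.den : ℚ) * (q : ℚ) - (x.num : ℚ)))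
      (farey i)
      {z : ℚ | z ∈ farey N ∧ 1 / (q : ℚ) ≤ z ∧ z ≤ 1 / ((q : ℚ) - 1)} := by
  -- basic numeric facts
  have hN0 : 0 < N := by
    rcases Nat.eq_zero_or_pos N with h | h
    · subst h; simp at hq1 hq2; omega
    · exact h
  have hiN : i * (i + 1) ≤ N := Nat.le_of_dvd hN0 hdvd
  have hdvd1 : (i + 1) ∣ N := (Dvd.dvd.mul_left dvd_rfl i).trans hdvd
  have hiq : i < q := by
    have h : i ≤ N / (i + 1) := by
      rw [Nat.le_div_iff_mul_le (by omega)]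
      exact hiN
    exact lt_of_le_of_lt h hq1
  have hq2' : 2 ≤ q := by omega
  have hiqN : i * q ≤ N := by
    have h := hq2
    rw [Nat.le_div_iff_mul_le (by omega)] at h
    rw [mul_comm]; exact h
  have hNle : N ≤ (i + 1) * (q - 1) := by
    have h1 : N / (i + 1) ≤ q - 1 := by omega
    calc N = (i + 1) * (N / (i + 1)) := by rw [Nat.mul_div_cancel' hdvd1]
    _ ≤ (i + 1) * (q - 1) := Nat.mul_le_mul_left _ h1
  -- rational versions
  have hqQ : (2 : ℚ) ≤ (q : ℚ) := by exact_mod_cast hq2'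
  have hq0Q : (0 : ℚ) < (q : ℚ) := by linarith
  have hq1Q : (0 : ℚ) < (q : ℚ) - 1 := by linarith
  set f : ℚ → ℚ := fun x : ℚ => (x.den : ℚ) / ((x.den : ℚ) * (q : ℚ) - (x.num : ℚ)) with hf
  set g : ℚ → ℚ := fun z : ℚ => (q : ℚ) - z⁻¹ with hg
  set T : Set ℚ := {z : ℚ | z ∈ farey N ∧ 1 / (q : ℚ) ≤ z ∧ z ≤ 1 / ((q : ℚ) - 1)} with hT
  have hfx : ∀ x ∈ farey i, f x = ((q : ℚ) - x)⁻¹ := fun x hx => key_eq q hq2' x hx.2.1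
  have hmapsf : Set.MapsTo f (farey i) T := by
    intro x hx
    obtain ⟨hx0, hx1, hxden⟩ := hx
    have hqx : (0 : ℚ) < (q : ℚ) - x := by linarith
    have hfxe := hfx x ⟨hx0, hx1, hxden⟩
    have hnum0 : 0 ≤ x.num := Rat.num_nonneg.mpr hx0
    have hd0 : (0 : ℚ) < (x.den : ℚ) := by exact_mod_cast x.pos
    have hnumden : (x.num : ℚ) ≤ (x.den : ℚ) := by
      rw [num_eq_self_mul_den x]
      nlinarith
    constructor
    · refine ⟨?_, ?_, ?_⟩
      · rw [hfxe]; exact inv_nonneg.mpr hqx.le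
      · rw [hfxe, inv_le_one_iff₀]
        right; linarith
      · -- denominator bound
        have hrw : f x = ((x.den : ℤ) : ℚ) / (((x.den : ℤ) * q - x.num : ℤ) : ℚ) := by
          simp only [hf]; push_cast; ring_nf
        have hdvd' : ((f x).den : ℤ) ∣ ((x.den : ℤ) * q - x.num) := by
          rw [hrw, ← Rat.divInt_eq_div]
          exact Rat.den_dvd _ _
        have hpos : 0 < (x.den : ℤ) * q - x.num := by
          have h1 : (1 : ℤ) ≤ (x.den : ℤ) := by exact_mod_cast x.pos
          have h2 : (2 : ℤ) ≤ (q : ℤ) := by exact_mod_cast hq2'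
          have h3 : x.num ≤ (x.den : ℤ) := by exact_mod_cast hnumden
          nlinarith
        have hle : ((f x).den : ℤ) ≤ (x.den : ℤ) * q - x.num :=
          Int.le_of_dvd hpos hdvd'
        have hbound : (x.den : ℤ) * q - x.num ≤ (N : ℤ) := by
          have h3 : (x.den : ℤ) ≤ (i : ℤ) := by exact_mod_cast hxden
          have h4 : (i : ℤ) * q ≤ (N : ℤ) := by exact_mod_cast hiqN
          have h5 : (0 : ℤ) ≤ (q : ℤ) := by positivity
          nlinarith
        exact_mod_cast hle.trans hbound
    · constructor
      · rw [hfxe, one_div]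
        apply inv_anti₀ hqx
        linarith
      · rw [hfxe, one_div]
        apply inv_anti₀ hq1Q
        linarith
  have hmapsg : Set.MapsTo g T (farey i) := by
    rintro z ⟨⟨hz0, hz1, hzden⟩, hzl, hzr⟩
    have hz0' : (0 : ℚ) < z := lt_of_lt_of_le (by positivity) hzl
    have hgz : g z = (q : ℚ) - z⁻¹ := rfl
    have hinvle : z⁻¹ ≤ (q : ℚ) := by
      rw [one_div] at hzl
      calc z⁻¹ ≤ ((q : ℚ)⁻¹)⁻¹ := inv_anti₀ (by positivity) hzl
      _ = (q : ℚ) := inv_inv _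
    have hinvge : (q : ℚ) - 1 ≤ z⁻¹ := by
      rw [one_div] at hzr
      calc (q : ℚ) - 1 = (((q : ℚ) - 1)⁻¹)⁻¹ := (inv_inv _).symm
      _ ≤ z⁻¹ := inv_anti₀ hz0' hzr
    refine ⟨by rw [hgz]; linarith, by rw [hgz]; linarith, ?_⟩
    -- denominator of q - z⁻¹ is at most i
    have hznum : 0 < z.num := Rat.num_pos.mpr hz0'
    set n : ℕ := z.num.natAbs with hn
    have hnz : (z.num : ℤ) = (n : ℤ) := (Int.natAbs_of_nonneg hznum.le).symm
    have hn1 : 1 ≤ n := by omega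
    -- key inequality  n * (q-1) ≤ z.den
    have hkey : n * (q - 1) ≤ z.den := by
      have hd0 : (0 : ℚ) < (z.den : ℚ) := by exact_mod_cast z.pos
      have h1 : (z.num : ℚ) * ((q : ℚ) - 1) ≤ (z.den : ℚ) := by
        rw [num_eq_self_mul_den z]
        have h := mul_le_mul_of_nonneg_right hzr hd0.le
        rw [one_div] at h
        have h2 : ((q : ℚ) - 1)⁻¹ * ((q : ℚ) - 1) = 1 := inv_mul_cancel₀ hq1Q.ne'
        nlinarith
      have h2 : ((n : ℤ) : ℚ) * ((q : ℚ) - 1) ≤ (z.den : ℚ) := by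
        rw [← hnz]; exact h1
      have h3 : ((n * (q - 1) : ℕ) : ℚ) ≤ ((z.den : ℕ) : ℚ) := by
        push_cast [Nat.cast_sub (show 1 ≤ q by omega)]
        push_cast at h2
        linarith
      exact_mod_cast h3
    have hni : n ≤ i := by
      by_contra hcon
      push_neg at hcon
      rcases Nat.lt_or_ge n (i + 2) with hlt | hge
      · -- n = i + 1
        have hni1 : n = i + 1 := by omega
        have h1 : (i + 1) * (q - 1) ≤ z.den := by rw [← hni1]; exact hkey
        have hdN : z.den = N := le_antisymm hzden (hNle.trans h1)
        have hcop : Nat.Coprime n z.den := z.reduced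
        rw [hni1, hdN] at hcop
        have hdg : (i + 1) ∣ Nat.gcd (i + 1) N := Nat.dvd_gcd dvd_rfl hdvd1
        have hc1 : Nat.gcd (i + 1) N = 1 := hcop
        rw [hc1] at hdg
        have := Nat.le_of_dvd Nat.one_pos hdg
        omega
      · -- n ≥ i + 2 is impossible
        have h1 : n * (q - 1) ≤ N := hkey.trans hzden
        have h2 : (i + 2) * (q - 1) ≤ n * (q - 1) := Nat.mul_le_mul_right _ hge
        have h3 : (i + 2) * (q - 1) ≤ (i + 1) * (q - 1) := h2.trans (h1.trans hNle)
        have h4 : i + 2 ≤ i + 1 := Nat.le_of_mul_le_mul_right h3 (by omega)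
        omega
    -- now (g z).den divides n
    have hzq : (z.num : ℚ) ≠ 0 := by exact_mod_cast hznum.ne'
    have hrw : g z = ((q * z.num - z.den : ℤ) : ℚ) / ((z.num : ℤ) : ℚ) := by
      have hinv : z⁻¹ = (z.den : ℚ) / (z.num : ℚ) := by
        rw [eq_div_iff hzq, num_eq_self_mul_den z, ← mul_assoc,
          inv_mul_cancel₀ hz0'.ne', one_mul]
      rw [hgz, hinv]
      push_cast
      field_simp
    have hdvd' : ((g z).den : ℤ) ∣ z.num := by
      rw [hrw, ← Rat.divInt_eq_div]
      exact Rat.den_dvd _ _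
    have h5 : ((g z).den : ℤ) ≤ (n : ℤ) := by
      rw [← hnz]
      exact Int.le_of_dvd hznum hdvd'
    have h6 : (g z).den ≤ n := by exact_mod_cast h5
    omega
  have hinv : Set.InvOn g f (farey i) T := by
    constructor
    · intro x hx
      have hx1 := hx.2.1
      simp only [hfx x hx, hg, inv_inv, sub_sub_cancel]
    · intro z hz
      have h := hfx (g z) (hmapsg hz)
      rw [h]
      simp only [hg, sub_sub_cancel, inv_inv]
  exact hinv.bijOn hmapsf hmapsg
end
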